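/- Let n ≥ 1 and let Λ = {λ_1 > λ_2 > … > λ_n > 0} be distinct positive reals, and let H ∈ T_Λ. Then there exists a unique n×n real orthogonal matrix U (U Uᵀ = Uᵀ U = I) such that H = U D Uᵀ with D = diag(λ_1,…,λ_n) and such that all entries of the first row of U are strictly positive: U(1,j) > 0 for all 1 ≤ j ≤ n. -/
import Mathlib


open Matrix

/-- A matrix is tridiagonal: entries vanish when the indices differ by more than one. -/
def IsTridiagonal {n : ℕ} (H : Matrix (Fin n) (Fin n) ℝ) : Prop :=
  ∀ i j : Fin n, ((i : ℕ) + 1 < (j : ℕ) ∨ (j : ℕ) + 1 < (i : ℕ)) → H i j = 0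

/-- The set `T_Λ` of `n × n` real symmetric tridiagonal matrices with negative sub-diagonal
entries whose spectrum equals `Λ = {λs 0, …, λs (n-1)}`. -/
def TLam {n : ℕ} (lams : Fin n → ℝ) : Set (Matrix (Fin n) (Fin n) ℝ) :=
  {H | H.IsSymm ∧ IsTridiagonal H ∧
    (∀ i j : Fin n, (j : ℕ) + 1 = (i : ℕ) → H i j < 0) ∧
    spectrum ℝ H = Set.range lams}

/-- The open positive orthant `S^{n-1}_{>0}` of the unit sphere in `ℝⁿ`. -/
def SposSet (n : ℕ) : Set (Fin n → ℝ) :=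
  {x | (∑ i, x i ^ 2) = 1 ∧ ∀ i, 0 < x i}

section Aux
variable {n : ℕ} {H : Matrix (Fin n) (Fin n) ℝ}

lemma tri_eigen_zero (hsym : H.IsSymm) (htri : IsTridiagonal H)
    (hsub : ∀ i j : Fin n, (j : ℕ) + 1 = (i : ℕ) → H i j < 0)
    {μ : ℝ} {v : Fin n → ℝ} (hv : H.mulVec v = μ • v)
    (h0 : ∀ i : Fin n, (i : ℕ) = 0 → v i = 0) : v = 0 := by
  have key : ∀ m : ℕ, ∀ i : Fin n, (i : ℕ) ≤ m → v i = 0 := by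
    intro m
    induction m with
    | zero => intro i hi; exact h0 i (Nat.le_zero.mp hi)
    | succ m ih =>
      intro i hi
      rcases Nat.lt_or_ge (i : ℕ) (m+1) with h | h
      · exact ih i (Nat.lt_succ_iff.mp h)
      have hieq : (i : ℕ) = m + 1 := le_antisymm hi h
      have hmn : m < n := by omega
      set j : Fin n := ⟨m, hmn⟩ with hj
      have hrow := congrFun hv j
      have hsum : ∑ k, H j k * v k = H j i * v i := by
        apply Finset.sum_eq_single
        · intro b _ hb
          rcases Nat.lt_or_ge (m+1) (b : ℕ) with hb2 | hb2
          · have hz : H j b = 0 := htri j b (Or.inl (by simpa [hj] using hb2))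
            simp [hz]
          · have hbm : (b : ℕ) ≤ m := by
              rcases Nat.lt_or_ge (b : ℕ) (m+1) with h' | h'
              · omega
              · exact absurd (Fin.ext (by omega : (b : ℕ) = (i : ℕ))) hb
            simp [ih b hbm]
        · intro hni; exact absurd (Finset.mem_univ i) hni
      have hvj : v j = 0 := ih j (by simp [hj])
      have hHji : H j i < 0 := by
        have h1 : H i j < 0 := hsub i j (by simp [hj, hieq])
        have h2 : H j i = H i j := congrFun (congrFun hsym i) j
        rw [h2]; exact h1
      have hmv : H.mulVec v j = ∑ k, H j k * v k := rfl
      rw [hmv, hsum] at hrow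
      have hr : H j i * v i = μ * v j := hrow
      rw [hvj, mul_zero] at hr
      exact (mul_eq_zero.mp hr).resolve_left (ne_of_lt hHji)
  funext i
  exact key (i : ℕ) i le_rfl

lemma eig_orth (hsym : H.IsSymm) {μ ν : ℝ} {v w : Fin n → ℝ}
    (hv : H.mulVec v = μ • v) (hw : H.mulVec w = ν • w) (hμν : μ ≠ ν) :
    ∑ i, v i * w i = 0 := by
  have h1 : ∑ i, (H.mulVec v) i * w i = ∑ i, v i * (H.mulVec w) i := by
    simp only [Matrix.mulVec, dotProduct, Finset.sum_mul, Finset.mul_sum]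
    rw [Finset.sum_comm]
    apply Finset.sum_congr rfl
    intro i _
    apply Finset.sum_congr rfl
    intro k _
    have h2 : H k i = H i k := congrFun (congrFun hsym i) k
    rw [h2]; ring
  rw [hv, hw] at h1
  simp only [Pi.smul_apply, smul_eq_mul] at h1
  have h3 : μ * ∑ i, v i * w i = ν * ∑ i, v i * w i := by
    rw [Finset.mul_sum, Finset.mul_sum]
    calc ∑ i, μ * (v i * w i) = ∑ i, μ * v i * w i := by
          apply Finset.sum_congr rfl; intros; ring
      _ = ∑ i, v i * (ν * w i) := h1
      _ = ∑ i, ν * (v i * w i) := by apply Finset.sum_congr rfl; intros; ring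
  have h4 : (μ - ν) * ∑ i, v i * w i = 0 := by linarith
  exact (mul_eq_zero.mp h4).resolve_left (sub_ne_zero.mpr hμν)

lemma unit_pos_eig_unique (hn : 0 < n) (hsym : H.IsSymm) (htri : IsTridiagonal H)
    (hsub : ∀ i j : Fin n, (j : ℕ) + 1 = (i : ℕ) → H i j < 0)
    {μ : ℝ} {v w : Fin n → ℝ}
    (hv : H.mulVec v = μ • v) (hw : H.mulVec w = μ • w)
    (hv1 : ∑ i, v i ^ 2 = 1) (hw1 : ∑ i, w i ^ 2 = 1)
    (hv0 : 0 < v ⟨0, hn⟩) (hw0 : 0 < w ⟨0, hn⟩) : v = w := by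
  set z : Fin n := ⟨0, hn⟩
  set u : Fin n → ℝ := w z • v - v z • w with hu
  have huv : H.mulVec u = μ • u := by
    rw [hu, Matrix.mulVec_sub, Matrix.mulVec_smul, Matrix.mulVec_smul, hv, hw,
      smul_sub, smul_comm (w z) μ, smul_comm (v z) μ]
  have hu0 : u = 0 := by
    apply tri_eigen_zero hsym htri hsub huv
    intro i hi
    have : i = z := Fin.ext hi
    rw [this, hu]
    simp [mul_comm]
  have heq : w z • v = v z • w := by
    have := sub_eq_zero.mp hu0
    exact this
  have hsq : (w z) ^ 2 = (v z) ^ 2 := by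
    have h1 : ∑ i, (w z * v i) ^ 2 = ∑ i, (v z * w i) ^ 2 := by
      apply Finset.sum_congr rfl
      intro i _
      rw [show w z * v i = (w z • v) i from rfl, heq]
      rfl
    calc (w z) ^ 2 = (w z) ^ 2 * ∑ i, v i ^ 2 := by rw [hv1, mul_one]
      _ = ∑ i, (w z * v i) ^ 2 := by rw [Finset.mul_sum]; apply Finset.sum_congr rfl; intros; ring
      _ = ∑ i, (v z * w i) ^ 2 := h1
      _ = (v z) ^ 2 * ∑ i, w i ^ 2 := by rw [Finset.mul_sum]; apply Finset.sum_congr rfl; intros; ring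
      _ = (v z) ^ 2 := by rw [hw1, mul_one]
  have hwz : w z = v z := by
    nlinarith
  funext i
  have h5 : w z * v i = v z * w i := congrFun heq i
  rw [hwz] at h5
  exact mul_left_cancel₀ (ne_of_gt hv0) h5

lemma exists_unit_pos_eig (hn : 0 < n) (hsym : H.IsSymm) (htri : IsTridiagonal H)
    (hsub : ∀ i j : Fin n, (j : ℕ) + 1 = (i : ℕ) → H i j < 0)
    {μ : ℝ} (hμ : μ ∈ spectrum ℝ H) :
    ∃ v : Fin n → ℝ, H.mulVec v = μ • v ∧ ∑ i, v i ^ 2 = 1 ∧ 0 < v ⟨0, hn⟩ := by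
  rw [spectrum.mem_iff] at hμ
  rw [Matrix.isUnit_iff_isUnit_det] at hμ
  have hdet : ((algebraMap ℝ (Matrix (Fin n) (Fin n) ℝ)) μ - H).det = 0 := by
    by_contra h
    exact hμ (isUnit_iff_ne_zero.mpr h)
  obtain ⟨v, hv0, hv⟩ := Matrix.exists_mulVec_eq_zero_iff.mpr hdet
  have heig : H.mulVec v = μ • v := by
    have : ((algebraMap ℝ (Matrix (Fin n) (Fin n) ℝ)) μ - H).mulVec v
        = μ • v - H.mulVec v := by
      rw [Matrix.sub_mulVec]
      congr 1
      rw [Algebra.algebraMap_eq_smul_one, Matrix.smul_mulVec, Matrix.one_mulVec]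
    rw [this] at hv
    exact (sub_eq_zero.mp hv).symm
  set z : Fin n := ⟨0, hn⟩
  have hvz : v z ≠ 0 := by
    intro h
    apply hv0
    apply tri_eigen_zero hsym htri hsub heig
    intro i hi
    have hiz : i = z := Fin.ext hi
    rwa [hiz]
  obtain ⟨u, hu, huz⟩ : ∃ u : Fin n → ℝ, H.mulVec u = μ • u ∧ 0 < u z := by
    rcases hvz.lt_or_gt with h | h
    · exact ⟨-v, by rw [Matrix.mulVec_neg, heig, smul_neg], by simpa using h⟩
    · exact ⟨v, heig, h⟩
  have hS : 0 < ∑ i, u i ^ 2 :=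
    Finset.sum_pos' (fun i _ => sq_nonneg _) ⟨z, Finset.mem_univ z, by positivity⟩
  set c : ℝ := (Real.sqrt (∑ i, u i ^ 2))⁻¹ with hcdef
  have hc : 0 < c := inv_pos.mpr (Real.sqrt_pos.mpr hS)
  refine ⟨c • u, ?_, ?_, ?_⟩
  · rw [Matrix.mulVec_smul, hu, smul_comm]
  · have h1 : ∑ i, (c • u) i ^ 2 = c ^ 2 * ∑ i, u i ^ 2 := by
      rw [Finset.mul_sum]
      apply Finset.sum_congr rfl
      intro i _
      simp [mul_pow]
    have h2 : c ^ 2 = (∑ i, u i ^ 2)⁻¹ := by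
      rw [hcdef, ← Real.sqrt_inv, Real.sq_sqrt (by positivity)]
    rw [h1, h2, inv_mul_cancel₀ (ne_of_gt hS)]
  · exact mul_pos hc huz

end Aux

/-- Every `H ∈ T_Λ` (for `Λ = {λ_1 > … > λ_n > 0}`) admits a unique orthogonal
diagonalization `H = U diag(λ) Uᵀ` with all entries of the first row of `U` strictly
positive. -/
theorem exists_unique_orth_diag_pos_first_row
    (n : ℕ) (hn : 1 ≤ n) (lams : Fin n → ℝ) (hanti : StrictAnti lams)
    (hpos : ∀ i, 0 < lams i)
    (H : Matrix (Fin n) (Fin n) ℝ) (hH : H ∈ TLam lams) :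
    ∃! U : Matrix (Fin n) (Fin n) ℝ,
      U * Uᵀ = 1 ∧ Uᵀ * U = 1 ∧ H = U * Matrix.diagonal lams * Uᵀ ∧
      ∀ j, 0 < U ⟨0, by omega⟩ j := by
  obtain ⟨hsym, htri, hsub, hspec⟩ := hH
  have hn0 : 0 < n := hn
  have hexists : ∀ j : Fin n, ∃ w : Fin n → ℝ,
      H.mulVec w = lams j • w ∧ ∑ i, w i ^ 2 = 1 ∧ 0 < w ⟨0, hn0⟩ :=
    fun j => exists_unit_pos_eig hn0 hsym htri hsub
      (by rw [hspec]; exact Set.mem_range_self j)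
  choose v hv1 hv2 hv3 using hexists
  set U : Matrix (Fin n) (Fin n) ℝ := Matrix.of fun i j => v j i with hU
  have hUtU : Uᵀ * U = 1 := by
    ext j k
    rw [Matrix.mul_apply, Matrix.one_apply]
    simp only [Matrix.transpose_apply, hU, Matrix.of_apply]
    by_cases h : j = k
    · subst h
      rw [if_pos rfl]
      calc ∑ i, v j i * v j i = ∑ i, v j i ^ 2 := by
            apply Finset.sum_congr rfl; intros; ring
        _ = 1 := hv2 j
    · rw [if_neg h]
      exact eig_orth hsym (hv1 j) (hv1 k) (fun he => h (hanti.injective he))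
  have hUUt : U * Uᵀ = 1 := mul_eq_one_comm.mpr hUtU
  have hHU : H * U = U * Matrix.diagonal lams := by
    ext i j
    rw [Matrix.mul_diagonal, Matrix.mul_apply]
    have h := congrFun (hv1 j) i
    simp only [Matrix.mulVec, dotProduct, Pi.smul_apply, smul_eq_mul] at h
    simp only [hU, Matrix.of_apply]
    exact h.trans (mul_comm _ _)
  have hHeq : H = U * Matrix.diagonal lams * Uᵀ := by
    calc H = H * (U * Uᵀ) := by rw [hUUt, mul_one]
      _ = (H * U) * Uᵀ := by rw [mul_assoc]
      _ = U * Matrix.diagonal lams * Uᵀ := by rw [hHU]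
  refine ⟨U, ⟨hUUt, hUtU, hHeq, fun j => hv3 j⟩, ?_⟩
  rintro U' ⟨hU'1, hU'2, hU'3, hU'4⟩
  have hHU' : H * U' = U' * Matrix.diagonal lams := by
    calc H * U' = (U' * Matrix.diagonal lams * U'ᵀ) * U' := by rw [← hU'3]
      _ = U' * Matrix.diagonal lams * (U'ᵀ * U') := by rw [mul_assoc]
      _ = U' * Matrix.diagonal lams := by rw [hU'2, mul_one]
  have hcol : ∀ j, (fun i => U' i j) = v j := by
    intro j
    apply unit_pos_eig_unique hn0 hsym htri hsub ?_ (hv1 j) ?_ (hv2 j) ?_ (hv3 j)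
    · funext i
      have h := congrFun (congrFun hHU' i) j
      rw [Matrix.mul_apply, Matrix.mul_diagonal] at h
      show ∑ k, H i k * U' k j = lams j * U' i j
      rw [h]; ring
    · have h := congrFun (congrFun hU'2 j) j
      rw [Matrix.mul_apply, Matrix.one_apply_eq] at h
      simp only [Matrix.transpose_apply] at h
      calc ∑ i, U' i j ^ 2 = ∑ i, U' i j * U' i j := by
            apply Finset.sum_congr rfl; intros; ring
        _ = 1 := h
    · exact hU'4 j
  ext i j
  exact congrFun (hcol j) i
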